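/- arXiv:1506.02572 — 4 statements merged into one kernel-verified Lean document; each statement's English description precedes it below -/
import Mathlib

section
/- Let O be a convex polygon in the Euclidean plane that is not a rectangle, and let ω be a real number with 0 < ω ≤ π/2. Then O has at most 3 narrow vertices, i.e., at most 3 vertices whose interior angle is at most ω. -/
open Real EuclideanGeometry

noncomputable section

abbrev Plane := EuclideanSpace ℝ (Fin 2)

/-- Counterclockwise rotation of a vector of the plane by angle `θ`. -/
def rot (θ : ℝ) (d : Plane) : Plane :=
  (WithLp.equiv 2 (Fin 2 → ℝ)).symm
    ![Real.cos θ * d 0 - Real.sin θ * d 1, Real.sin θ * d 0 + Real.cos θ * d 1]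

/-- A convex polygon: the convex hull of at least 3 points in strictly convex position;
the points are the vertices. -/
structure ConvexPolygon where
  verts : Finset Plane
  three_le_card : 3 ≤ verts.card
  strictConvexPos : ∀ v ∈ verts, v ∉ convexHull ℝ ((verts : Set Plane) \ {v})

/-- The polygon as a subset of the plane. -/
def ConvexPolygon.body (O : ConvexPolygon) : Set Plane :=
  convexHull ℝ (O.verts : Set Plane)

/-- `x` and `y` are adjacent vertices of `O` (the segment joining them is an edge of `O`). -/
def ConvexPolygon.Adj (O : ConvexPolygon) (x y : Plane) : Prop :=
  x ∈ O.verts ∧ y ∈ O.verts ∧ x ≠ y ∧ segment ℝ x y ⊆ frontier O.body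

/-- The interior angle of `O` at a vertex `v`: the angle `∠ u v w` where `u` and `w` are
the two vertices adjacent to `v`. -/
def ConvexPolygon.intAngle (O : ConvexPolygon) (v : Plane) : ℝ :=
  sSup {θ | ∃ u w, O.Adj v u ∧ O.Adj v w ∧ u ≠ w ∧ θ = ∠ u v w}

/-- A narrow vertex: a vertex whose interior angle is at most `ω`. -/
def ConvexPolygon.IsNarrow (O : ConvexPolygon) (ω : ℝ) (v : Plane) : Prop :=
  v ∈ O.verts ∧ O.intAngle v ≤ ω

/-- `O` is a rectangle: exactly 4 vertices, all interior angles `π/2`. -/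
def ConvexPolygon.IsRectangle (O : ConvexPolygon) : Prop :=
  O.verts.card = 4 ∧ ∀ v ∈ O.verts, O.intAngle v = Real.pi / 2

/-- The `ω`-wedge with apex `q` and first arm direction `d`. -/
def wedge (ω : ℝ) (q d : Plane) : Set Plane :=
  {x | ∃ s t : ℝ, 0 ≤ s ∧ 0 ≤ t ∧ x = q + s • d + t • rot ω d}

/-- The first arm of a wedge: the ray from `q` in direction `d`. -/
def arm1 (q d : Plane) : Set Plane := {x | ∃ t : ℝ, 0 ≤ t ∧ x = q + t • d}

/-- The second arm of an `ω`-wedge: the ray from `q` in direction `rot ω d`. -/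
def arm2 (ω : ℝ) (q d : Plane) : Set Plane := arm1 q (rot ω d)

/-- `(q, d)` is a valid `ω`-probe of `O`: a wedge with unit arm direction containing `O`,
each of whose arms meets `O`. -/
def IsValidProbe (ω : ℝ) (O : ConvexPolygon) (q d : Plane) : Prop :=
  ‖d‖ = 1 ∧ O.body ⊆ wedge ω q d ∧
    (arm1 q d ∩ O.body).Nonempty ∧ (arm2 ω q d ∩ O.body).Nonempty

/-- A directed line: a point together with a unit direction. -/
structure DirLine where
  pt : Plane
  dir : Plane
  norm_dir : ‖dir‖ = 1

/-- Membership of a point in a directed line. -/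
def DirLine.mem (L : DirLine) (x : Plane) : Prop := ∃ t : ℝ, x = L.pt + t • L.dir

/-- A valid `ω`-probe of `O` along the directed line `L`. -/
def IsValidProbeAlong (ω : ℝ) (O : ConvexPolygon) (L : DirLine) (q d : Plane) : Prop :=
  IsValidProbe ω O q d ∧ L.mem q ∧ ∃ t : ℝ, 0 ≤ t ∧ q + t • L.dir ∈ O.body

/-- `p` is the point of `A` closest to `q`. -/
def ClosestOn (q : Plane) (A : Set Plane) (p : Plane) : Prop :=
  p ∈ A ∧ ∀ x ∈ A, dist q p ≤ dist q x

open scoped RealInnerProductSpace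

lemma inner_coords (x y : Plane) : ⟪x, y⟫ = x 0 * y 0 + x 1 * y 1 := by
  simp [PiLp.inner_apply, Fin.sum_univ_two, RCLike.inner_apply, conj_trivial]; ring

lemma normsq_coords (x : Plane) : ‖x‖ ^ 2 = x 0 ^ 2 + x 1 ^ 2 := by
  rw [← real_inner_self_eq_norm_sq, inner_coords]; ring

lemma ext2 {x y : Plane} (h0 : x 0 = y 0) (h1 : x 1 = y 1) : x = y := by
  ext i; fin_cases i <;> assumption

lemma coord_add (x y : Plane) (i : Fin 2) : (x + y) i = x i + y i := rfl
lemma coord_sub (x y : Plane) (i : Fin 2) : (x - y) i = x i - y i := rfl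
lemma coord_smul (c : ℝ) (x : Plane) (i : Fin 2) : (c • x) i = c * x i := rfl
lemma coord_neg (x : Plane) (i : Fin 2) : (-x) i = -(x i) := rfl

def crossP (x y : Plane) : ℝ := x 0 * y 1 - x 1 * y 0

lemma lagrange (x y : Plane) : ⟪x, y⟫ ^ 2 + crossP x y ^ 2 = ‖x‖ ^ 2 * ‖y‖ ^ 2 := by
  rw [inner_coords, normsq_coords, normsq_coords, crossP]; ring

lemma normsq_pos {x : Plane} (hx : x ≠ 0) : 0 < x 0 ^ 2 + x 1 ^ 2 := by
  have h1 : 0 < ‖x‖ := norm_pos_iff.mpr hx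
  rw [← normsq_coords]
  positivity

lemma no_between (O : ConvexPolygon) {p m r : Plane} (hp : p ∈ O.verts) (hm : m ∈ O.verts)
    (hr : r ∈ O.verts) (hpm : p ≠ m) (hrm : r ≠ m) (h : Wbtw ℝ p m r) : False := by
  have h1 : m ∈ convexHull ℝ ({p, r} : Set Plane) := by
    rw [convexHull_pair]; exact h.mem_segment
  have h2 : ({p, r} : Set Plane) ⊆ (O.verts : Set Plane) \ {m} := by
    rintro z (rfl | rfl)
    · exact ⟨hp, hpm⟩
    · exact ⟨hr, hrm⟩
  exact O.strictConvexPos m hm (convexHull_mono h2 h1)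

lemma not_collinear (O : ConvexPolygon) {v x y : Plane} (hv : v ∈ O.verts) (hx : x ∈ O.verts)
    (hy : y ∈ O.verts) (hvx : x ≠ v) (hvy : y ≠ v) (hxy : x ≠ y) :
    ¬ Collinear ℝ ({v, x, y} : Set Plane) := by
  intro h
  rcases h.wbtw_or_wbtw_or_wbtw with h' | h' | h'
  · exact no_between O hv hx hy hvx.symm hxy.symm h'
  · exact no_between O hx hy hv hxy hvy.symm h'
  · exact no_between O hy hv hx hvy hvx h'

lemma cross_ne_zero (O : ConvexPolygon) {v x y : Plane} (hv : v ∈ O.verts) (hx : x ∈ O.verts)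
    (hy : y ∈ O.verts) (hvx : x ≠ v) (hvy : y ≠ v) (hxy : x ≠ y) :
    crossP (x - v) (y - v) ≠ 0 := by
  intro h
  apply not_collinear O hv hx hy hvx hvy hxy
  have hx0 : x - v ≠ 0 := sub_ne_zero.mpr hvx
  have hd : 0 < (x - v) 0 ^ 2 + (x - v) 1 ^ 2 := normsq_pos hx0
  rw [collinear_iff_of_mem (Set.mem_insert v {x, y})]
  refine ⟨x - v, ?_⟩
  rintro p (rfl | rfl | rfl)
  · exact ⟨0, by simp⟩
  · exact ⟨1, by simp⟩
  · refine ⟨((x - v) 0 * (p - v) 0 + (x - v) 1 * (p - v) 1) / ((x - v) 0 ^ 2 + (x - v) 1 ^ 2), ?_⟩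
    have : p - v = (((x - v) 0 * (p - v) 0 + (x - v) 1 * (p - v) 1) /
        ((x - v) 0 ^ 2 + (x - v) 1 ^ 2)) • (x - v) := by
      simp only [crossP, coord_sub] at h
      simp only [coord_sub] at hd
      apply ext2 <;> simp only [coord_smul, coord_sub] <;>
        rw [div_mul_eq_mul_div, eq_div_iff hd.ne']
      · linear_combination (-(x 1 - v 1)) * h
      · linear_combination (x 0 - v 0) * h
    rw [vadd_eq_add, ← this]
    abel
def perp (n : Plane) : Plane := (WithLp.equiv 2 (Fin 2 → ℝ)).symm ![-(n 1), n 0]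

lemma perp_coord0 (n : Plane) : perp n 0 = -(n 1) := rfl
lemma perp_coord1 (n : Plane) : perp n 1 = n 0 := rfl

lemma hk_inner (n z z' : Plane) :
    ⟪n, z⟫ * ⟪n, z'⟫ + ⟪perp n, z⟫ * ⟪perp n, z'⟫ = ‖n‖ ^ 2 * ⟪z, z'⟫ := by
  simp only [inner_coords, normsq_coords, perp_coord0, perp_coord1]; ring

lemma hk_cross (n z z' : Plane) :
    ⟪n, z⟫ * ⟪perp n, z'⟫ - ⟪perp n, z⟫ * ⟪n, z'⟫ = ‖n‖ ^ 2 * crossP z z' := by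
  simp only [inner_coords, normsq_coords, perp_coord0, perp_coord1, crossP]; ring

lemma exists_halfplane (O : ConvexPolygon) {v : Plane} (hv : v ∈ O.verts) :
    ∃ n : Plane, ∀ x ∈ O.verts, x ≠ v → 0 < ⟪n, x - v⟫ := by
  have hfin : ((O.verts : Set Plane) \ {v}).Finite := Set.Finite.diff O.verts.finite_toSet
  obtain ⟨f, u, hfv, hfb⟩ := geometric_hahn_banach_point_closed (convex_convexHull ℝ _)
    (hfin.isCompact_convexHull ℝ).isClosed (O.strictConvexPos v hv)
  refine ⟨(InnerProductSpace.toDual ℝ Plane).symm f, fun x hx hxv => ?_⟩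
  have hxK : x ∈ convexHull ℝ ((O.verts : Set Plane) \ {v}) :=
    subset_convexHull ℝ _ ⟨hx, hxv⟩
  have h2 := hfb x hxK
  rw [inner_sub_right, InnerProductSpace.toDual_symm_apply, InnerProductSpace.toDual_symm_apply]
  linarith

lemma sqrt_helper {h k N Z : ℝ} (hh : 0 < h) (hN : 0 < N) (hZ : 0 ≤ Z)
    (hsum : h ^ 2 + k ^ 2 = N ^ 2 * Z ^ 2) :
    Real.sqrt (1 + (k / h) ^ 2) = N * Z / h := by
  rw [show 1 + (k / h) ^ 2 = (N * Z / h) ^ 2 by field_simp; linear_combination hsum]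
  exact Real.sqrt_sq (by positivity)

lemma cos_helper {h h' k k' N Z Z' P : ℝ} (hh : 0 < h) (hh' : 0 < h') (hN : 0 < N)
    (hZ : 0 < Z) (hZ' : 0 < Z')
    (hsum : h * h' + k * k' = N ^ 2 * P)
    (hs : h ^ 2 + k ^ 2 = N ^ 2 * Z ^ 2) (hs' : h' ^ 2 + k' ^ 2 = N ^ 2 * Z' ^ 2) :
    1 / Real.sqrt (1 + (k / h) ^ 2) * (1 / Real.sqrt (1 + (k' / h') ^ 2)) +
      k / h / Real.sqrt (1 + (k / h) ^ 2) * (k' / h' / Real.sqrt (1 + (k' / h') ^ 2)) =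
      P / (Z * Z') := by
  rw [sqrt_helper hh hN hZ.le hs, sqrt_helper hh' hN hZ'.le hs']
  field_simp
  linear_combination hsum

lemma norm_sum_sq {n : Plane} (z : Plane) :
    ⟪n, z⟫ ^ 2 + ⟪perp n, z⟫ ^ 2 = ‖n‖ ^ 2 * ‖z‖ ^ 2 := by
  have h := hk_inner n z z
  rw [real_inner_self_eq_norm_sq] at h
  linear_combination h

lemma angle_formula {n : Plane} (hn : n ≠ 0) {z z' : Plane} (hz : 0 < ⟪n, z⟫)
    (hz' : 0 < ⟪n, z'⟫) :
    InnerProductGeometry.angle z z' =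
      |Real.arctan (⟪perp n, z⟫ / ⟪n, z⟫) - Real.arctan (⟪perp n, z'⟫ / ⟪n, z'⟫)| := by
  have hzn : z ≠ 0 := by rintro rfl; simp at hz
  have hzn' : z' ≠ 0 := by rintro rfl; simp at hz'
  have h1 : (0:ℝ) < ‖n‖ := norm_pos_iff.mpr hn
  have h2 : (0:ℝ) < ‖z‖ := norm_pos_iff.mpr hzn
  have h3 : (0:ℝ) < ‖z'‖ := norm_pos_iff.mpr hzn'
  set s := ⟪perp n, z⟫ / ⟪n, z⟫ with hs
  set s' := ⟪perp n, z'⟫ / ⟪n, z'⟫ with hs'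
  have hb1 := Real.arctan_lt_pi_div_two s
  have hb2 := Real.neg_pi_div_two_lt_arctan s
  have hb3 := Real.arctan_lt_pi_div_two s'
  have hb4 := Real.neg_pi_div_two_lt_arctan s'
  have hD : |Real.arctan s - Real.arctan s'| ≤ π := by
    rw [abs_sub_le_iff]; constructor <;> linarith
  have hcos : Real.cos (|Real.arctan s - Real.arctan s'|) = ⟪z, z'⟫ / (‖z‖ * ‖z'‖) := by
    rw [Real.cos_abs, Real.cos_sub, Real.cos_arctan, Real.sin_arctan, Real.cos_arctan,
      Real.sin_arctan, hs, hs']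
    exact cos_helper hz hz' h1 h2 h3 (hk_inner n z z') (norm_sum_sq z) (norm_sum_sq z')
  rw [InnerProductGeometry.angle, ← hcos, Real.arccos_cos (abs_nonneg _) hD]
lemma body_closed (O : ConvexPolygon) : IsClosed O.body :=
  (O.verts.finite_toSet.isCompact_convexHull ℝ).isClosed

lemma inner_n_perp (n : Plane) : ⟪n, perp n⟫ = 0 := by
  rw [inner_coords, perp_coord0, perp_coord1]; ring

lemma inner_perp_perp (n : Plane) : ⟪perp n, perp n⟫ = ‖n‖ ^ 2 := by
  rw [inner_coords, perp_coord0, perp_coord1, normsq_coords]; ring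

lemma adj_of_support (O : ConvexPolygon) {v u : Plane} (hv : v ∈ O.verts) (hu : u ∈ O.verts)
    (hne : v ≠ u) (g : Plane) (hg : g ≠ 0) (hgu : ⟪g, u - v⟫ = 0)
    (hall : ∀ x ∈ O.verts, ⟪g, x - v⟫ ≤ 0) : O.Adj v u := by
  have hgpos : (0:ℝ) < ‖g‖ := norm_pos_iff.mpr hg
  refine ⟨hv, hu, hne, ?_⟩
  intro p hp
  have hbody : p ∈ O.body :=
    (convex_convexHull ℝ _).segment_subset (subset_convexHull ℝ _ hv)
      (subset_convexHull ℝ _ hu) hp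
  have hhalf : O.body ⊆ {z : Plane | ⟪g, z⟫ ≤ ⟪g, v⟫} := by
    apply convexHull_min
    · intro x hx
      have h1 := hall x hx
      rw [inner_sub_right] at h1
      simpa using h1
    · exact convex_halfSpace_le
        ⟨fun a b => inner_add_right g a b, fun c x => real_inner_smul_right g x c⟩ _
  have hguv : ⟪g, u⟫ = ⟪g, v⟫ := by rw [inner_sub_right] at hgu; linarith
  have hpv : ⟪g, p⟫ = ⟪g, v⟫ := by
    obtain ⟨a, b, ha, hb, hab, rfl⟩ := hp
    rw [inner_add_right, real_inner_smul_right, real_inner_smul_right, hguv]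
    linear_combination (⟪g, v⟫) * hab
  rw [(body_closed O).frontier_eq]
  refine ⟨hbody, fun hint => ?_⟩
  rcases Metric.isOpen_iff.mp isOpen_interior _ hint with ⟨ε, hε, hball⟩
  have hq : p + (ε / (2 * ‖g‖)) • g ∈ O.body := by
    apply interior_subset
    apply hball
    rw [Metric.mem_ball, dist_eq_norm]
    have : p + (ε / (2 * ‖g‖)) • g - p = (ε / (2 * ‖g‖)) • g := by abel
    rw [this, norm_smul, Real.norm_eq_abs, abs_of_pos (by positivity)]
    have h3 : ε / (2 * ‖g‖) * ‖g‖ = ε / 2 := by field_simp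
    rw [h3]; linarith
  have h2 := hhalf hq
  rw [Set.mem_setOf_eq, inner_add_right, real_inner_smul_right,
    real_inner_self_eq_norm_sq, hpv] at h2
  have h4 : 0 < ε / (2 * ‖g‖) * ‖g‖ ^ 2 := by positivity
  linarith
def slp (n v x : Plane) : ℝ := ⟪perp n, x - v⟫ / ⟪n, x - v⟫

lemma g_self (n : Plane) (a b : ℝ) :
    ⟪a • perp n - b • n, a • perp n - b • n⟫ = (a ^ 2 + b ^ 2) * ‖n‖ ^ 2 := by
  simp only [inner_coords, coord_sub, coord_smul, perp_coord0, perp_coord1, normsq_coords]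
  ring

lemma g_apply (n y : Plane) (a b : ℝ) :
    ⟪a • perp n - b • n, y⟫ = a * ⟪perp n, y⟫ - b * ⟪n, y⟫ := by
  simp only [inner_coords, coord_sub, coord_smul, perp_coord0, perp_coord1]
  ring

lemma slp_inj (O : ConvexPolygon) {n v x y : Plane} (hn : n ≠ 0) (hv : v ∈ O.verts)
    (hx : x ∈ O.verts) (hy : y ∈ O.verts) (hxv : x ≠ v) (hyv : y ≠ v)
    (hpx : 0 < ⟪n, x - v⟫) (hpy : 0 < ⟪n, y - v⟫)
    (h : slp n v x = slp n v y) : x = y := by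
  by_contra hxy
  apply cross_ne_zero O hv hx hy hxv hyv hxy
  have hN : (0:ℝ) < ‖n‖ := norm_pos_iff.mpr hn
  have hc := hk_cross n (x - v) (y - v)
  rw [slp, slp, div_eq_div_iff hpx.ne' hpy.ne'] at h
  have h0 : ‖n‖ ^ 2 * crossP (x - v) (y - v) = 0 := by linarith
  have := mul_eq_zero.mp h0
  rcases this with h1 | h1
  · nlinarith
  · exact h1

lemma exists_good (O : ConvexPolygon) {v : Plane} (hv : v ∈ O.verts) :
    ∃ n u w : Plane, n ≠ 0 ∧ (∀ x ∈ O.verts, x ≠ v → 0 < ⟪n, x - v⟫) ∧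
      u ∈ O.verts ∧ w ∈ O.verts ∧ u ≠ v ∧ w ≠ v ∧ u ≠ w ∧ O.Adj v u ∧ O.Adj v w ∧
      ∀ x ∈ O.verts, x ≠ v → slp n v w ≤ slp n v x ∧ slp n v x ≤ slp n v u := by
  classical
  obtain ⟨n, hn⟩ := exists_halfplane O hv
  set S := O.verts.erase v with hS
  have hcard : 2 ≤ S.card := by
    have := O.three_le_card
    rw [hS, Finset.card_erase_of_mem hv]; omega
  have hSne : S.Nonempty := Finset.card_pos.mp (by omega)
  obtain ⟨u, huS, humax⟩ := S.exists_max_image (slp n v) hSne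
  obtain ⟨w, hwS, hwmin⟩ := S.exists_min_image (slp n v) hSne
  have huv : u ≠ v := Finset.ne_of_mem_erase huS
  have humem : u ∈ O.verts := Finset.mem_of_mem_erase huS
  have hwv : w ≠ v := Finset.ne_of_mem_erase hwS
  have hwmem : w ∈ O.verts := Finset.mem_of_mem_erase hwS
  have hpu : 0 < ⟪n, u - v⟫ := hn u humem huv
  have hpw : 0 < ⟪n, w - v⟫ := hn w hwmem hwv
  have hn0 : n ≠ 0 := by
    rintro rfl
    simp at hpu
  have hneq : u ≠ w := by
    intro huw
    obtain ⟨x, hx, y, hy, hxy⟩ := Finset.one_lt_card.mp (by omega : 1 < S.card)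
    apply hxy
    have h1 : slp n v x = slp n v u :=
      le_antisymm (humax x hx) (huw ▸ hwmin x hx)
    have h2 : slp n v y = slp n v u :=
      le_antisymm (humax y hy) (huw ▸ hwmin y hy)
    exact slp_inj O hn0 hv (Finset.mem_of_mem_erase hx) (Finset.mem_of_mem_erase hy)
      (Finset.ne_of_mem_erase hx) (Finset.ne_of_mem_erase hy)
      (hn x (Finset.mem_of_mem_erase hx) (Finset.ne_of_mem_erase hx))
      (hn y (Finset.mem_of_mem_erase hy) (Finset.ne_of_mem_erase hy))
      (h1.trans h2.symm)
  have hN : (0:ℝ) < ‖n‖ := norm_pos_iff.mpr hn0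
  have hadj_u : O.Adj v u := by
    apply adj_of_support O hv humem huv.symm
      (⟪n, u - v⟫ • perp n - ⟪perp n, u - v⟫ • n)
    · intro h0
      have h1 := g_self n ⟪n, u - v⟫ ⟪perp n, u - v⟫
      rw [h0, inner_zero_left] at h1
      have hx1 : 0 < ⟪n, u - v⟫ ^ 2 * ‖n‖ ^ 2 := by positivity
      have hx2 : 0 ≤ ⟪perp n, u - v⟫ ^ 2 * ‖n‖ ^ 2 := by positivity
      nlinarith
    · rw [g_apply]; ring
    · intro x hx
      rw [g_apply]
      rcases eq_or_ne x v with rfl | hxv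
      · simp
      · have hslp := (humax x (Finset.mem_erase.mpr ⟨hxv, hx⟩))
        rw [slp, slp, div_le_div_iff₀ (hn x hx hxv) hpu] at hslp
        linarith
  have hadj_w : O.Adj v w := by
    apply adj_of_support O hv hwmem hwv.symm
      ((-⟪n, w - v⟫) • perp n - (-⟪perp n, w - v⟫) • n)
    · intro h0
      have h1 := g_self n (-⟪n, w - v⟫) (-⟪perp n, w - v⟫)
      rw [h0, inner_zero_left] at h1
      have hx1 : 0 < ⟪n, w - v⟫ ^ 2 * ‖n‖ ^ 2 := by positivity
      have hx2 : 0 ≤ ⟪perp n, w - v⟫ ^ 2 * ‖n‖ ^ 2 := by positivity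
      nlinarith
    · rw [g_apply]; ring
    · intro x hx
      rw [g_apply]
      rcases eq_or_ne x v with rfl | hxv
      · simp
      · have hslp := (hwmin x (Finset.mem_erase.mpr ⟨hxv, hx⟩))
        rw [slp, slp, div_le_div_iff₀ hpw (hn x hx hxv)] at hslp
        linarith
  exact ⟨n, u, w, hn0, hn, humem, hwmem, huv, hwv, hneq, hadj_u, hadj_w,
    fun x hx hxv => ⟨hwmin x (Finset.mem_erase.mpr ⟨hxv, hx⟩),
      humax x (Finset.mem_erase.mpr ⟨hxv, hx⟩)⟩⟩
lemma euclid_angle_eq (x v y : Plane) :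
    ∠ x v y = InnerProductGeometry.angle (x - v) (y - v) := by
  rw [EuclideanGeometry.angle, vsub_eq_sub, vsub_eq_sub]

lemma angle_le_intAngle (O : ConvexPolygon) {v x y : Plane} (hv : v ∈ O.verts)
    (hx : x ∈ O.verts) (hy : y ∈ O.verts) (hxv : x ≠ v) (hyv : y ≠ v) :
    ∠ x v y ≤ O.intAngle v := by
  obtain ⟨n, u, w, hn0, hn, humem, hwmem, huv, hwv, huw, hadju, hadjw, hsl⟩ := exists_good O hv
  have hpx := hn x hx hxv
  have hpy := hn y hy hyv
  have hpu := hn u humem huv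
  have hpw := hn w hwmem hwv
  have hex : ∠ x v y = |Real.arctan (slp n v x) - Real.arctan (slp n v y)| := by
    rw [euclid_angle_eq]; exact angle_formula hn0 hpx hpy
  have heu : ∠ u v w = |Real.arctan (slp n v u) - Real.arctan (slp n v w)| := by
    rw [euclid_angle_eq]; exact angle_formula hn0 hpu hpw
  have h1 : ∠ x v y ≤ ∠ u v w := by
    rw [hex, heu]
    obtain ⟨bx1, bx2⟩ := hsl x hx hxv
    obtain ⟨by1, by2⟩ := hsl y hy hyv
    have m1 := Real.arctan_strictMono.monotone bx1
    have m2 := Real.arctan_strictMono.monotone bx2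
    have m3 := Real.arctan_strictMono.monotone by1
    have m4 := Real.arctan_strictMono.monotone by2
    have h2 : |Real.arctan (slp n v x) - Real.arctan (slp n v y)| ≤
        Real.arctan (slp n v u) - Real.arctan (slp n v w) := by
      rw [abs_sub_le_iff]; constructor <;> linarith
    exact h2.trans (le_abs_self _)
  have hmem : ∠ u v w ∈ {θ | ∃ u' w', O.Adj v u' ∧ O.Adj v w' ∧ u' ≠ w' ∧ θ = ∠ u' v w'} :=
    ⟨u, w, hadju, hadjw, huw, rfl⟩
  have hbdd : BddAbove {θ | ∃ u' w', O.Adj v u' ∧ O.Adj v w' ∧ u' ≠ w' ∧ θ = ∠ u' v w'} := by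
    refine ⟨π, ?_⟩
    rintro θ ⟨u', w', _, _, _, rfl⟩
    exact EuclideanGeometry.angle_le_pi u' v w'
  exact h1.trans (le_csSup hbdd hmem)

lemma inner_nonneg_of_narrow (O : ConvexPolygon) {ω : ℝ} (hω : ω ≤ π / 2)
    {v x y : Plane} (hnar : O.IsNarrow ω v) (hx : x ∈ O.verts) (hy : y ∈ O.verts)
    (hxv : x ≠ v) (hyv : y ≠ v) : 0 ≤ ⟪x - v, y - v⟫ := by
  have h1 : ∠ x v y ≤ π / 2 :=
    (angle_le_intAngle O hnar.1 hx hy hxv hyv).trans (hnar.2.trans hω)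
  have h0 : 0 ≤ ∠ x v y := EuclideanGeometry.angle_nonneg x v y
  have h2 : 0 ≤ Real.cos (∠ x v y) := by
    apply Real.cos_nonneg_of_mem_Icc
    constructor <;> [linarith; linarith]
  have h3 := InnerProductGeometry.cos_angle_mul_norm_mul_norm (x - v) (y - v)
  rw [← euclid_angle_eq] at h3
  rw [← h3]
  exact mul_nonneg h2 (mul_nonneg (norm_nonneg _) (norm_nonneg _))
lemma core_alg {A B p α β : ℝ} (hA : 0 < A) (hB : 0 < B) (hp : 0 ≤ p)
    (hα : 0 < α) (hβ : 0 < β) (hs : 1 < α + β)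
    (hi : 0 ≤ (1 - α) * A - β * p)
    (hii : 0 ≤ (1 - β) * B - α * p)
    (hiii : 0 ≤ -(α * (1 - α) * A) - β * (1 - β) * B + ((1 - α) * (1 - β) + α * β) * p) :
    p = 0 ∧ α = 1 ∧ β = 1 := by
  have hp0 : p = 0 := by
    have h1 : p ≤ 0 := by
      nlinarith [mul_nonneg hα.le hi, mul_nonneg hβ.le hii]
    linarith
  subst hp0
  have hα1 : α ≤ 1 := by nlinarith
  have hβ1 : β ≤ 1 := by nlinarith
  refine ⟨rfl, ?_, ?_⟩
  · by_contra hne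
    have hlt : α < 1 := lt_of_le_of_ne hα1 hne
    nlinarith [mul_pos (mul_pos hα (by linarith : (0:ℝ) < 1 - α)) hA,
      mul_nonneg (mul_nonneg hβ.le (by linarith : (0:ℝ) ≤ 1 - β)) hB.le]
  · by_contra hne
    have hlt : β < 1 := lt_of_le_of_ne hβ1 hne
    nlinarith [mul_pos (mul_pos hβ (by linarith : (0:ℝ) < 1 - β)) hB,
      mul_nonneg (mul_nonneg hα.le (by linarith : (0:ℝ) ≤ 1 - α)) hA.le]

lemma middle_decomp {n : Plane} (hn : n ≠ 0) {z1 z2 z3 : Plane}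
    (h1 : 0 < ⟪n, z1⟫) (h2 : 0 < ⟪n, z2⟫) (h3 : 0 < ⟪n, z3⟫)
    (hc13 : crossP z1 z3 ≠ 0) (hc23 : crossP z2 z3 ≠ 0)
    (hs1 : ⟪perp n, z1⟫ / ⟪n, z1⟫ ≤ ⟪perp n, z3⟫ / ⟪n, z3⟫)
    (hs2 : ⟪perp n, z3⟫ / ⟪n, z3⟫ ≤ ⟪perp n, z2⟫ / ⟪n, z2⟫) :
    ∃ α β : ℝ, 0 < α ∧ 0 < β ∧ z3 = α • z1 + β • z2 := by
  have hN : (0:ℝ) < ‖n‖ := norm_pos_iff.mpr hn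
  rw [div_le_div_iff₀ h1 h3] at hs1
  rw [div_le_div_iff₀ h3 h2] at hs2
  have k13 := hk_cross n z1 z3
  have k32 := hk_cross n z3 z2
  have k12 := hk_cross n z1 z2
  have hn2 : (0:ℝ) < ‖n‖ ^ 2 := by positivity
  have c13 : 0 < crossP z1 z3 := by
    rcases hc13.lt_or_gt with h | h
    · exfalso
      linarith [mul_pos hn2 (neg_pos.mpr h)]
    · exact h
  have h32ne : crossP z3 z2 ≠ 0 := by
    simp only [crossP] at hc23 ⊢
    intro hh; apply hc23; linarith
  have c32 : 0 < crossP z3 z2 := by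
    rcases h32ne.lt_or_gt with h | h
    · exfalso
      linarith [mul_pos hn2 (neg_pos.mpr h)]
    · exact h
  have c12 : 0 < crossP z1 z2 := by
    have e : ‖n‖ ^ 2 * crossP z1 z2 * ⟪n, z3⟫ =
        ‖n‖ ^ 2 * crossP z1 z3 * ⟪n, z2⟫ + ‖n‖ ^ 2 * crossP z3 z2 * ⟪n, z1⟫ := by
      rw [← k13, ← k32, ← k12]; ring
    by_contra hle
    push_neg at hle
    nlinarith [mul_pos (mul_pos hn2 c13) h2, mul_pos (mul_pos hn2 c32) h1,
      mul_pos hn2 h3, mul_nonneg (mul_nonneg hn2.le (neg_nonneg.mpr hle)) h3.le]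
  refine ⟨crossP z3 z2 / crossP z1 z2, crossP z1 z3 / crossP z1 z2,
    div_pos c32 c12, div_pos c13 c12, ?_⟩
  apply ext2 <;> simp only [coord_add, coord_smul] <;>
    rw [div_mul_eq_mul_div, div_mul_eq_mul_div, ← add_div, eq_div_iff c12.ne'] <;>
    · simp only [crossP]; ring
lemma rect_of_middle (O : ConvexPolygon) {ω : ℝ} (hω : ω ≤ π / 2) {a b c d : Plane}
    (hna : O.IsNarrow ω a) (hnb : O.IsNarrow ω b) (hnc : O.IsNarrow ω c) (hnd : O.IsNarrow ω d)
    (hab : a ≠ b) (hac : a ≠ c) (had : a ≠ d) (hbc : b ≠ c) (hbd : b ≠ d) (hcd : c ≠ d)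
    {α β : ℝ} (hα : 0 < α) (hβ : 0 < β) (hdec : d - a = α • (b - a) + β • (c - a)) :
    ⟪b - a, c - a⟫ = 0 ∧ d = b + c - a := by
  have ha := hna.1
  have hb := hnb.1
  have hc := hnc.1
  have hd := hnd.1
  have hp : 0 ≤ ⟪b - a, c - a⟫ := inner_nonneg_of_narrow O hω hna hb hc hab.symm hac.symm
  have hi0 : 0 ≤ ⟪a - b, d - b⟫ := inner_nonneg_of_narrow O hω hnb ha hd hab hbd.symm
  have hii0 : 0 ≤ ⟪a - c, d - c⟫ := inner_nonneg_of_narrow O hω hnc ha hd hac hcd.symm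
  have hiii0 : 0 ≤ ⟪b - d, c - d⟫ := inner_nonneg_of_narrow O hω hnd hb hc hbd hcd
  have hA : 0 < ⟪b - a, b - a⟫ := by
    rw [real_inner_self_eq_norm_sq]
    have h5 : (0:ℝ) < ‖b - a‖ := norm_pos_iff.mpr (sub_ne_zero.mpr hab.symm)
    positivity
  have hB : 0 < ⟪c - a, c - a⟫ := by
    rw [real_inner_self_eq_norm_sq]
    have h5 : (0:ℝ) < ‖c - a‖ := norm_pos_iff.mpr (sub_ne_zero.mpr hac.symm)
    positivity
  have hd0 := congrArg (fun z : Plane => z 0) hdec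
  have hd1 := congrArg (fun z : Plane => z 1) hdec
  simp only [coord_sub, coord_add, coord_smul] at hd0 hd1
  have hdd : d = a + α • (b - a) + β • (c - a) := by
    apply ext2 <;> simp only [coord_add, coord_smul, coord_sub] <;> linarith
  subst hdd
  -- scalar forms
  have e1 : ⟪a - b, a + α • (b - a) + β • (c - a) - b⟫ =
      (1 - α) * ⟪b - a, b - a⟫ - β * ⟪b - a, c - a⟫ := by
    simp only [inner_coords, coord_add, coord_smul, coord_sub]; ring
  have e2 : ⟪a - c, a + α • (b - a) + β • (c - a) - c⟫ =
      (1 - β) * ⟪c - a, c - a⟫ - α * ⟪b - a, c - a⟫ := by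
    simp only [inner_coords, coord_add, coord_smul, coord_sub]; ring
  have e3 : ⟪b - (a + α • (b - a) + β • (c - a)), c - (a + α • (b - a) + β • (c - a))⟫ =
      -(α * (1 - α) * ⟪b - a, b - a⟫) - β * (1 - β) * ⟪c - a, c - a⟫ +
        ((1 - α) * (1 - β) + α * β) * ⟪b - a, c - a⟫ := by
    simp only [inner_coords, coord_add, coord_smul, coord_sub]; ring
  rw [e1] at hi0
  rw [e2] at hii0
  rw [e3] at hiii0
  have hsum : 1 < α + β := by
    by_contra hle
    push_neg at hle
    set m := α + β with hm
    have hm0 : 0 < m := by positivity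
    have hPmem : (α / m) • b + (β / m) • c ∈ convexHull ℝ ({a, b, c} : Set Plane) := by
      apply (convex_convexHull ℝ _)
        (subset_convexHull ℝ _ (by simp : b ∈ ({a, b, c} : Set Plane)))
        (subset_convexHull ℝ _ (by simp : c ∈ ({a, b, c} : Set Plane)))
        (div_nonneg hα.le hm0.le) (div_nonneg hβ.le hm0.le)
      field_simp; exact hm.symm
    have hdP : a + α • (b - a) + β • (c - a) =
        (1 - m) • a + m • ((α / m) • b + (β / m) • c) := by
      apply ext2 <;> simp only [coord_add, coord_smul, coord_sub] <;> field_simp <;> ring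
    have hmem2 : a + α • (b - a) + β • (c - a) ∈ convexHull ℝ ({a, b, c} : Set Plane) := by
      rw [hdP]
      exact (convex_convexHull ℝ _)
        (subset_convexHull ℝ _ (by simp : a ∈ ({a, b, c} : Set Plane))) hPmem
        (by linarith) hm0.le (by ring)
    have hsub : ({a, b, c} : Set Plane) ⊆ (O.verts : Set Plane) \ {a + α • (b - a) + β • (c - a)} := by
      rintro z (rfl | rfl | rfl)
      · exact ⟨ha, fun hz => had (by simpa using hz)⟩
      · exact ⟨hb, fun hz => hbd (by simpa using hz)⟩
      · exact ⟨hc, fun hz => hcd (by simpa using hz)⟩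
    exact O.strictConvexPos _ hd (convexHull_mono hsub hmem2)
  obtain ⟨hp0, hα1, hβ1⟩ := core_alg hA hB hp hα hβ hsum hi0 hii0 hiii0
  subst hα1
  subst hβ1
  refine ⟨hp0, ?_⟩
  apply ext2 <;> simp only [coord_add, coord_smul, coord_sub] <;> ring
lemma cramer_decomp {u v : Plane} (h : crossP u v ≠ 0) (w : Plane) :
    w = (crossP w v / crossP u v) • u + (crossP u w / crossP u v) • v := by
  apply ext2 <;> simp only [coord_add, coord_smul] <;>
    rw [div_mul_eq_mul_div, div_mul_eq_mul_div, ← add_div, eq_div_iff h] <;>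
    · simp only [crossP]; ring

lemma final (O : ConvexPolygon) {ω : ℝ} (hω : ω ≤ π / 2) {a b c d : Plane}
    (hna : O.IsNarrow ω a) (hnb : O.IsNarrow ω b) (hnc : O.IsNarrow ω c) (hnd : O.IsNarrow ω d)
    (hab : a ≠ b) (hac : a ≠ c) (had : a ≠ d) (hbc : b ≠ c) (hbd : b ≠ d) (hcd : c ≠ d)
    (hperp : ⟪b - a, c - a⟫ = 0) (hrect : d = b + c - a) :
    O.IsRectangle := by
  classical
  subst hrect
  have ha := hna.1
  have hb := hnb.1
  have hc := hnc.1
  have hd := hnd.1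
  have hperpc : (b 0 - a 0) * (c 0 - a 0) + (b 1 - a 1) * (c 1 - a 1) = 0 := by
    simpa [inner_coords, coord_sub] using hperp
  set F : Finset Plane := insert a (insert b (insert c {b + c - a})) with hF
  have hFsub : F ⊆ O.verts := by
    intro z hz
    simp only [hF, Finset.mem_insert, Finset.mem_singleton] at hz
    rcases hz with rfl | rfl | rfl | rfl <;> assumption
  by_cases hver : O.verts ⊆ F
  · have hveq : O.verts = F := Finset.Subset.antisymm hver hFsub
    have hkey : ∀ v, O.IsNarrow ω v → ∀ x y, x ∈ O.verts → y ∈ O.verts → x ≠ v → y ≠ v →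
        ⟪x - v, y - v⟫ = 0 → O.intAngle v = π / 2 := by
      intro v hnv x y hx hy hxv hyv hinner
      have h1 : ∠ x v y = π / 2 := by
        rw [euclid_angle_eq]
        exact (InnerProductGeometry.inner_eq_zero_iff_angle_eq_pi_div_two _ _).mp hinner
      have h2 := angle_le_intAngle O hnv.1 hx hy hxv hyv
      rw [h1] at h2
      have h3 := hnv.2
      linarith
    constructor
    · rw [hveq, hF,
        Finset.card_insert_of_notMem (by simp [hab, hac, had]),
        Finset.card_insert_of_notMem (by simp [hbc, hbd]),
        Finset.card_insert_of_notMem (by simp [hcd]), Finset.card_singleton]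
    · intro v hv
      rw [hveq] at hv
      simp only [hF, Finset.mem_insert, Finset.mem_singleton] at hv
      rcases hv with hv | hv | hv | hv <;> rw [hv]
      · exact hkey a hna b c hb hc hab.symm hac.symm hperp
      · refine hkey b hnb a (b + c - a) ha hd hab hbd.symm ?_
        simp only [inner_coords, coord_sub, coord_add]
        linear_combination -hperpc
      · refine hkey c hnc a (b + c - a) ha hd hac hcd.symm ?_
        simp only [inner_coords, coord_sub, coord_add]
        linear_combination -hperpc
      · refine hkey (b + c - a) hnd b c hb hc hbd hcd ?_
        simp only [inner_coords, coord_sub, coord_add]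
        linear_combination hperpc
  · exfalso
    obtain ⟨e, he, heF⟩ := Finset.not_subset.mp hver
    simp only [hF, Finset.mem_insert, Finset.mem_singleton, not_or] at heF
    obtain ⟨hea, heb, hec, hed⟩ := heF
    have s1 : 0 ≤ ⟪b - a, e - a⟫ := inner_nonneg_of_narrow O hω hna hb he hab.symm hea
    have s2 : 0 ≤ ⟪c - a, e - a⟫ := inner_nonneg_of_narrow O hω hna hc he hac.symm hea
    have s3 : 0 ≤ ⟪a - b, e - b⟫ := inner_nonneg_of_narrow O hω hnb ha he hab heb
    have s4 : 0 ≤ ⟪a - c, e - c⟫ := inner_nonneg_of_narrow O hω hnc ha he hac hec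
    have hAn : 0 < (b - a) 0 ^ 2 + (b - a) 1 ^ 2 := normsq_pos (sub_ne_zero.mpr hab.symm)
    have hBn : 0 < (c - a) 0 ^ 2 + (c - a) 1 ^ 2 := normsq_pos (sub_ne_zero.mpr hac.symm)
    have hA : 0 < (b 0 - a 0) ^ 2 + (b 1 - a 1) ^ 2 := by simpa [coord_sub] using hAn
    have hB : 0 < (c 0 - a 0) ^ 2 + (c 1 - a 1) ^ 2 := by simpa [coord_sub] using hBn
    have hcr : crossP (b - a) (c - a) ≠ 0 := by
      intro h0
      have hl := lagrange (b - a) (c - a)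
      rw [hperp, h0] at hl
      have h5 : (0:ℝ) < ‖b - a‖ := norm_pos_iff.mpr (sub_ne_zero.mpr hab.symm)
      have h6 : (0:ℝ) < ‖c - a‖ := norm_pos_iff.mpr (sub_ne_zero.mpr hac.symm)
      have h7 : (0:ℝ) < ‖b - a‖ ^ 2 * ‖c - a‖ ^ 2 := by positivity
      simp at hl
      rcases hl with hl | hl
      · exact sub_ne_zero.mpr hab.symm hl
      · exact sub_ne_zero.mpr hac.symm hl
    have hdec := cramer_decomp hcr (e - a)
    set α := crossP (e - a) (c - a) / crossP (b - a) (c - a) with hαdef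
    set β := crossP (b - a) (e - a) / crossP (b - a) (c - a) with hβdef
    have h0 := congrArg (fun z : Plane => z 0) hdec
    have h1 := congrArg (fun z : Plane => z 1) hdec
    simp only [coord_add, coord_smul, coord_sub] at h0 h1
    have s1c : 0 ≤ (b 0 - a 0) * (e 0 - a 0) + (b 1 - a 1) * (e 1 - a 1) := by
      simpa [inner_coords, coord_sub] using s1
    have s2c : 0 ≤ (c 0 - a 0) * (e 0 - a 0) + (c 1 - a 1) * (e 1 - a 1) := by
      simpa [inner_coords, coord_sub] using s2
    have s3c : 0 ≤ (a 0 - b 0) * (e 0 - b 0) + (a 1 - b 1) * (e 1 - b 1) := by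
      simpa [inner_coords, coord_sub] using s3
    have s4c : 0 ≤ (a 0 - c 0) * (e 0 - c 0) + (a 1 - c 1) * (e 1 - c 1) := by
      simpa [inner_coords, coord_sub] using s4
    have hαA : (b 0 - a 0) * (e 0 - a 0) + (b 1 - a 1) * (e 1 - a 1) =
        α * ((b 0 - a 0) ^ 2 + (b 1 - a 1) ^ 2) := by
      linear_combination (b 0 - a 0) * h0 + (b 1 - a 1) * h1 + β * hperpc
    have hβB : (c 0 - a 0) * (e 0 - a 0) + (c 1 - a 1) * (e 1 - a 1) =
        β * ((c 0 - a 0) ^ 2 + (c 1 - a 1) ^ 2) := by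
      linear_combination (c 0 - a 0) * h0 + (c 1 - a 1) * h1 + α * hperpc
    have hα0 : 0 ≤ α := by
      by_contra hgt
      push_neg at hgt
      have h9 := mul_neg_of_neg_of_pos hgt hA
      linarith [s1c, hαA]
    have hβ0 : 0 ≤ β := by
      by_contra hgt
      push_neg at hgt
      have h9 := mul_neg_of_neg_of_pos hgt hB
      linarith [s2c, hβB]
    have hα1 : α ≤ 1 := by
      by_contra hgt
      push_neg at hgt
      have h9 := mul_pos hA (by linarith : (0:ℝ) < α - 1)
      linarith [s3c, hαA]
    have hβ1 : β ≤ 1 := by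
      by_contra hgt
      push_neg at hgt
      have h9 := mul_pos hB (by linarith : (0:ℝ) < β - 1)
      linarith [s4c, hβB]
    have he_mem : e ∈ convexHull ℝ ({a, b, c, b + c - a} : Set Plane) := by
      have hmemP : (1 - α) • a + α • b ∈ convexHull ℝ ({a, b, c, b + c - a} : Set Plane) :=
        (convex_convexHull ℝ _)
          (subset_convexHull ℝ _ (by simp : a ∈ ({a, b, c, b + c - a} : Set Plane)))
          (subset_convexHull ℝ _ (by simp : b ∈ ({a, b, c, b + c - a} : Set Plane)))
          (by linarith) hα0 (by ring)
      have hmemQ : (1 - α) • c + α • (b + c - a) ∈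
          convexHull ℝ ({a, b, c, b + c - a} : Set Plane) :=
        (convex_convexHull ℝ _)
          (subset_convexHull ℝ _ (by simp : c ∈ ({a, b, c, b + c - a} : Set Plane)))
          (subset_convexHull ℝ _ (by simp : b + c - a ∈ ({a, b, c, b + c - a} : Set Plane)))
          (by linarith) hα0 (by ring)
      have heq : e = (1 - β) • ((1 - α) • a + α • b) +
          β • ((1 - α) • c + α • (b + c - a)) := by
        apply ext2 <;> simp only [coord_add, coord_smul, coord_sub]
        · linear_combination h0
        · linear_combination h1
      rw [heq]
      exact (convex_convexHull ℝ _) hmemP hmemQ (by linarith) hβ0 (by ring)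
    have hsub2 : ({a, b, c, b + c - a} : Set Plane) ⊆ (O.verts : Set Plane) \ {e} := by
      rintro z (rfl | rfl | rfl | rfl)
      · exact ⟨ha, fun hz => hea (Set.mem_singleton_iff.mp hz).symm⟩
      · exact ⟨hb, fun hz => heb (Set.mem_singleton_iff.mp hz).symm⟩
      · exact ⟨hc, fun hz => hec (Set.mem_singleton_iff.mp hz).symm⟩
      · exact ⟨hd, fun hz => hed (Set.mem_singleton_iff.mp hz).symm⟩
    exact O.strictConvexPos e he (convexHull_mono hsub2 he_mem)
lemma main_case (O : ConvexPolygon) {ω : ℝ} (hω : ω ≤ π / 2) {a x y m : Plane}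
    (hna : O.IsNarrow ω a) (hnx : O.IsNarrow ω x) (hny : O.IsNarrow ω y) (hnm : O.IsNarrow ω m)
    (hax : a ≠ x) (hay : a ≠ y) (ham : a ≠ m) (hxy : x ≠ y) (hxm : x ≠ m) (hym : y ≠ m)
    {n : Plane} (hn0 : n ≠ 0)
    (hpx : 0 < ⟪n, x - a⟫) (hpy : 0 < ⟪n, y - a⟫) (hpm : 0 < ⟪n, m - a⟫)
    (hs1 : ⟪perp n, x - a⟫ / ⟪n, x - a⟫ ≤ ⟪perp n, m - a⟫ / ⟪n, m - a⟫)
    (hs2 : ⟪perp n, m - a⟫ / ⟪n, m - a⟫ ≤ ⟪perp n, y - a⟫ / ⟪n, y - a⟫) :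
    O.IsRectangle := by
  have hcxm : crossP (x - a) (m - a) ≠ 0 :=
    cross_ne_zero O hna.1 hnx.1 hnm.1 hax.symm ham.symm hxm
  have hcym : crossP (y - a) (m - a) ≠ 0 :=
    cross_ne_zero O hna.1 hny.1 hnm.1 hay.symm ham.symm hym
  obtain ⟨α, β, hα, hβ, hdec⟩ := middle_decomp hn0 hpx hpy hpm hcxm hcym hs1 hs2
  obtain ⟨hperp, hrect⟩ :=
    rect_of_middle O hω hna hnx hny hnm hax hay ham hxy hxm hym hα hβ hdec
  exact final O hω hna hnx hny hnm hax hay ham hxy hxm hym hperp hrect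
/-- A convex polygon that is not a rectangle has at most 3 narrow vertices. -/
theorem narrow_vertices_le_three (ω : ℝ) (hω₀ : 0 < ω) (hω : ω ≤ Real.pi / 2)
    (O : ConvexPolygon) (hO : ¬ O.IsRectangle) :
    {v | O.IsNarrow ω v}.ncard ≤ 3 := by
  classical
  by_contra hcon
  push_neg at hcon
  have hsub : {v | O.IsNarrow ω v} ⊆ (O.verts : Set Plane) := fun v hv => hv.1
  have hfin : {v | O.IsNarrow ω v}.Finite := Set.Finite.subset O.verts.finite_toSet hsub
  have hTcard : 4 ≤ hfin.toFinset.card := by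
    rw [← Set.ncard_eq_toFinset_card _ hfin]
    omega
  set T := hfin.toFinset with hT
  obtain ⟨a, haT⟩ := Finset.card_pos.mp (show 0 < T.card by omega)
  obtain ⟨b, hbT⟩ := Finset.card_pos.mp (show 0 < (T.erase a).card by
    rw [Finset.card_erase_of_mem haT]; omega)
  have hbne := Finset.mem_erase.mp hbT
  obtain ⟨c, hcT⟩ := Finset.card_pos.mp (show 0 < ((T.erase a).erase b).card by
    rw [Finset.card_erase_of_mem hbT, Finset.card_erase_of_mem haT]; omega)
  have hcne := Finset.mem_erase.mp hcT
  have hcne2 := Finset.mem_erase.mp hcne.2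
  obtain ⟨d, hdT⟩ := Finset.card_pos.mp (show 0 < (((T.erase a).erase b).erase c).card by
    rw [Finset.card_erase_of_mem hcT, Finset.card_erase_of_mem hbT,
      Finset.card_erase_of_mem haT]; omega)
  have hdne := Finset.mem_erase.mp hdT
  have hdne2 := Finset.mem_erase.mp hdne.2
  have hdne3 := Finset.mem_erase.mp hdne2.2
  -- narrowness
  have hna : O.IsNarrow ω a := by rwa [hT, Set.Finite.mem_toFinset] at haT
  have hnb : O.IsNarrow ω b := by
    have := hbne.2; rwa [hT, Set.Finite.mem_toFinset] at this
  have hnc : O.IsNarrow ω c := by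
    have := hcne2.2; rwa [hT, Set.Finite.mem_toFinset] at this
  have hnd : O.IsNarrow ω d := by
    have := hdne3.2; rwa [hT, Set.Finite.mem_toFinset] at this
  -- distinctness
  have nab : a ≠ b := (hbne.1).symm
  have nac : a ≠ c := (hcne2.1).symm
  have nad : a ≠ d := (hdne3.1).symm
  have nbc : b ≠ c := (hcne.1).symm
  have nbd : b ≠ d := (hdne2.1).symm
  have ncd : c ≠ d := (hdne.1).symm
  -- halfplane at a
  obtain ⟨n, hn⟩ := exists_halfplane O hna.1
  have hpb : 0 < ⟪n, b - a⟫ := hn b hnb.1 nab.symm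
  have hpc : 0 < ⟪n, c - a⟫ := hn c hnc.1 nac.symm
  have hpd : 0 < ⟪n, d - a⟫ := hn d hnd.1 nad.symm
  have hn0 : n ≠ 0 := by rintro rfl; simp at hpb
  apply hO
  rcases le_total (⟪perp n, b - a⟫ / ⟪n, b - a⟫) (⟪perp n, c - a⟫ / ⟪n, c - a⟫) with h1 | h1
  · rcases le_total (⟪perp n, c - a⟫ / ⟪n, c - a⟫) (⟪perp n, d - a⟫ / ⟪n, d - a⟫) with h2 | h2
    · exact main_case O hω hna hnb hnd hnc nab nad nac nbd nbc ncd.symm hn0 hpb hpd hpc h1 h2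
    · rcases le_total (⟪perp n, b - a⟫ / ⟪n, b - a⟫) (⟪perp n, d - a⟫ / ⟪n, d - a⟫) with h3 | h3
      · exact main_case O hω hna hnb hnc hnd nab nac nad nbc nbd ncd hn0 hpb hpc hpd h3 h2
      · exact main_case O hω hna hnd hnc hnb nad nac nab ncd.symm nbd.symm nbc.symm hn0
          hpd hpc hpb h3 h1
  · rcases le_total (⟪perp n, b - a⟫ / ⟪n, b - a⟫) (⟪perp n, d - a⟫ / ⟪n, d - a⟫) with h2 | h2
    · exact main_case O hω hna hnc hnd hnb nac nad nab ncd nbc.symm nbd.symm hn0 hpc hpd hpb h1 h2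
    · rcases le_total (⟪perp n, c - a⟫ / ⟪n, c - a⟫) (⟪perp n, d - a⟫ / ⟪n, d - a⟫) with h3 | h3
      · exact main_case O hω hna hnc hnb hnd nac nab nad nbc.symm ncd nbd hn0 hpc hpb hpd h3 h2
      · exact main_case O hω hna hnd hnb hnc nad nab nac nbd.symm ncd.symm nbc hn0 hpd hpb hpc h3 h1
end
end

section
/- Let O be a convex polygon, let ω satisfy 0 < ω ≤ π/2, and let q be a point of the plane with q ∉ O. Then there is at most one valid ω-probe of O with apex q: if (q, d₁) and (q, d₁') are valid ω-probes of O, then d₁ = d₁'. -/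
open Real EuclideanGeometry

noncomputable section

lemma norm_one_coords_aux (d : Plane) (h : ‖d‖ = 1) : d 0 ^ 2 + d 1 ^ 2 = 1 := by
  rw [EuclideanSpace.norm_eq, Fin.sum_univ_two] at h
  have := Real.sqrt_eq_one.mp h
  simpa [Real.norm_eq_abs, sq_abs] using this

/-- From a point on a ray from `q` lying inside the `d'`-wedge, extract
coordinate equations. -/
lemma wedge_coords_aux (ω : ℝ) (q d d' a : Plane) (t₁ : ℝ)
    (ha : a = q + t₁ • d) (haw : a ∈ wedge ω q d') :
    ∃ s t : ℝ, 0 ≤ s ∧ 0 ≤ t ∧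
      t₁ * d 0 = s * d' 0 + t * (Real.cos ω * d' 0 - Real.sin ω * d' 1) ∧
      t₁ * d 1 = s * d' 1 + t * (Real.sin ω * d' 0 + Real.cos ω * d' 1) := by
  obtain ⟨s, t, hs, ht, hw⟩ := haw
  refine ⟨s, t, hs, ht, ?_, ?_⟩
  · have hv : t₁ • d = s • d' + t • rot ω d' := by
      apply add_left_cancel (a := q)
      rw [← ha, hw, add_assoc]
    have := congrArg (fun z : Plane => z 0) hv
    simpa [rot] using this
  · have hv : t₁ • d = s • d' + t • rot ω d' := by
      apply add_left_cancel (a := q)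
      rw [← ha, hw, add_assoc]
    have := congrArg (fun z : Plane => z 1) hv
    simpa [rot] using this

set_option maxHeartbeats 800000 in
lemma probe_unique_aux (ω : ℝ) (hω₀ : 0 < ω) (hω : ω ≤ Real.pi / 2)
    (body : Set Plane) (q : Plane) (hq : q ∉ body) (d d' : Plane)
    (hd1 : ‖d‖ = 1) (hd'1 : ‖d'‖ = 1)
    (hsub : body ⊆ wedge ω q d) (hsub' : body ⊆ wedge ω q d')
    (harm : (arm1 q d ∩ body).Nonempty) (harm' : (arm1 q d' ∩ body).Nonempty) :
    d = d' := by
  have hσ : 0 < Real.sin ω := Real.sin_pos_of_pos_of_lt_pi hω₀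
    (lt_of_le_of_lt hω (by linarith [Real.pi_pos]))
  obtain ⟨a, ⟨t₁, ht₁, ha⟩, haO⟩ := harm
  obtain ⟨a', ⟨t₂, ht₂, ha'⟩, ha'O⟩ := harm'
  have ht₁pos : 0 < t₁ := by
    rcases ht₁.lt_or_eq with h | h
    · exact h
    · exfalso; apply hq; rw [← h, zero_smul, add_zero] at ha; rwa [ha] at haO
  have ht₂pos : 0 < t₂ := by
    rcases ht₂.lt_or_eq with h | h
    · exact h
    · exfalso; apply hq; rw [← h, zero_smul, add_zero] at ha'; rwa [ha'] at ha'O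
  obtain ⟨s, t, hs, ht, e1, e2⟩ := wedge_coords_aux ω q d d' a t₁ ha (hsub' haO)
  obtain ⟨s', t', hs', ht', e3, e4⟩ := wedge_coords_aux ω q d' d a' t₂ ha' (hsub ha'O)
  have hx : d 0 ^ 2 + d 1 ^ 2 = 1 := norm_one_coords_aux d hd1
  have hy : d' 0 ^ 2 + d' 1 ^ 2 = 1 := norm_one_coords_aux d' hd'1
  set c := Real.cos ω
  set σ := Real.sin ω
  -- cross products
  have hA : t₁ * (d' 0 * d 1 - d' 1 * d 0) = t * σ := by
    linear_combination d' 0 * e2 - d' 1 * e1 + t * σ * hy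
  have hB : t₂ * (d 0 * d' 1 - d 1 * d' 0) = t' * σ := by
    linear_combination d 0 * e4 - d 1 * e3 + t' * σ * hx
  have hA0 : 0 ≤ d' 0 * d 1 - d' 1 * d 0 := by
    nlinarith [mul_nonneg ht hσ.le]
  have hB0 : 0 ≤ d 0 * d' 1 - d 1 * d' 0 := by
    nlinarith [mul_nonneg ht' hσ.le]
  have hA1 : d' 0 * d 1 - d' 1 * d 0 = 0 := le_antisymm (by linarith) hA0
  have ht0 : t = 0 := by
    have : t * σ = 0 := by rw [← hA, hA1, mul_zero]
    rcases mul_eq_zero.mp this with h | h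
    · exact h
    · exact absurd h hσ.ne'
  subst ht0
  have e1' : t₁ * d 0 = s * d' 0 := by linarith
  have e2' : t₁ * d 1 = s * d' 1 := by linarith
  have hst : s = t₁ := by
    have hsq : s ^ 2 = t₁ ^ 2 := by
      linear_combination (-(t₁ * d 0) - s * d' 0) * e1' + (-(t₁ * d 1) - s * d' 1) * e2'
        + t₁ ^ 2 * hx - s ^ 2 * hy
    have h2 : (s - t₁) * (s + t₁) = 0 := by linear_combination hsq
    rcases mul_eq_zero.mp h2 with h | h
    · linarith
    · linarith
  subst hst
  have h0 : d 0 = d' 0 := mul_left_cancel₀ ht₁pos.ne' e1'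
  have h1 : d 1 = d' 1 := mul_left_cancel₀ ht₁pos.ne' e2'
  ext i; fin_cases i <;> assumption

/-- there is at most one valid `ω`-probe of `O` with a given apex `q ∉ O`. -/
theorem probe_unique_at_apex (ω : ℝ) (hω₀ : 0 < ω) (hω : ω ≤ Real.pi / 2)
    (O : ConvexPolygon) (q : Plane) (hq : q ∉ O.body) (d d' : Plane)
    (h : IsValidProbe ω O q d) (h' : IsValidProbe ω O q d') : d = d' := by
  obtain ⟨hd1, hsub, harm, -⟩ := h
  obtain ⟨hd'1, hsub', harm', -⟩ := h'
  exact probe_unique_aux ω hω₀ hω O.body q hq d d' hd1 hd'1 hsub hsub' harm harm'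

end
end

section
/- Let Q be a convex polygon and let e be an edge of Q with endpoints a and b. Assume at least one ω-wedge contains Q. Let F_Q be the intersection of all ω-wedges that contain Q, let H_e be the closed half-plane bounded by the line through a and b on the side not containing the interior of Q, and let F_{Q,e} = F_Q ∩ H_e. If F_{Q,e} is not contained in the line through a and b, then F_{Q,e} contains a (non-degenerate) triangle with base e; that is, there exists a point c not on the line through a and b such that the closed triangle with vertices a, b, c is contained in F_{Q,e}. -/
open Real EuclideanGeometry

noncomputable section

/-- The feasible region `F_Q`: the intersection of all `ω`-wedges containing `Q`. -/
def feasible (ω : ℝ) (Q : ConvexPolygon) : Set Plane :=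
  ⋂ (q : Plane) (d : Plane) (_ : ‖d‖ = 1 ∧ Q.body ⊆ wedge ω q d), wedge ω q d

lemma wedge_convex (ω : ℝ) (q d : Plane) : Convex ℝ (wedge ω q d) := by
  rintro x ⟨s₁, t₁, hs₁, ht₁, rfl⟩ y ⟨s₂, t₂, hs₂, ht₂, rfl⟩ α β hα hβ hαβ
  refine ⟨α * s₁ + β * s₂, α * t₁ + β * t₂, by positivity, by positivity, ?_⟩
  have : α + β = 1 := hαβ
  match_scalars <;> ring_nf <;> nlinarith [this]

lemma feasible_convex (ω : ℝ) (Q : ConvexPolygon) : Convex ℝ (feasible ω Q) := by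
  unfold feasible
  exact convex_iInter fun q => convex_iInter fun d => convex_iInter fun _ => wedge_convex ω q d

lemma body_subset_feasible (ω : ℝ) (Q : ConvexPolygon) : Q.body ⊆ feasible ω Q := by
  intro x hx
  simp only [feasible, Set.mem_iInter]
  rintro q d ⟨-, hsub⟩
  exact hsub hx

/-- if the feasible region `F_{Q,e}` of an edge `e = ab` of `Q` is not contained
in the line through `a` and `b`, then it contains a non-degenerate triangle with base `e`. -/
theorem feasible_region_contains_triangle (ω : ℝ) (hω₀ : 0 < ω) (hω : ω ≤ Real.pi / 2)
    (Q : ConvexPolygon) (a b : Plane) (he : Q.Adj a b)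
    (hW : ∃ q d : Plane, ‖d‖ = 1 ∧ Q.body ⊆ wedge ω q d)
    (f : Plane →L[ℝ] ℝ) (c : ℝ) (hf : f ≠ 0) (hfa : f a = c) (hfb : f b = c)
    (hside : ∀ x ∈ interior Q.body, f x < c)
    (hnotline :
      ¬ (feasible ω Q ∩ {x | c ≤ f x} ⊆ (affineSpan ℝ ({a, b} : Set Plane) : Set Plane))) :
    ∃ p : Plane, p ∉ affineSpan ℝ ({a, b} : Set Plane) ∧
      convexHull ℝ ({a, b, p} : Set Plane) ⊆ feasible ω Q ∩ {x | c ≤ f x} := by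
  obtain ⟨p, hpS, hp⟩ := Set.not_subset.mp hnotline
  refine ⟨p, hp, ?_⟩
  have hSconv : Convex ℝ (feasible ω Q ∩ {x | c ≤ f x}) :=
    (feasible_convex ω Q).inter (convex_halfSpace_ge f.toLinearMap.isLinear c)
  have haS : a ∈ feasible ω Q ∩ {x | c ≤ f x} :=
    ⟨body_subset_feasible ω Q (subset_convexHull ℝ _ he.1), by simp [hfa]⟩
  have hbS : b ∈ feasible ω Q ∩ {x | c ≤ f x} :=
    ⟨body_subset_feasible ω Q (subset_convexHull ℝ _ he.2.1), by simp [hfb]⟩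
  exact convexHull_min (by rintro x (rfl | rfl | rfl) <;> assumption) hSconv


end
end

section
/- Let O be a convex polygon with a vertex v, and let u and w be the two vertices adjacent to v on the boundary of O. Then for all points a, b ∈ O with a ≠ v and b ≠ v, the angle ∠(a, v, b) is at most the interior angle ∠(u, v, w) of O at v. -/
open Real EuclideanGeometry

noncomputable section

section Aux

instance : Fact (Module.finrank ℝ Plane = 2) := ⟨finrank_euclideanSpace_fin⟩

/-- A fixed orientation of the plane. -/
def ori : Orientation ℝ Plane (Fin 2) :=
  (EuclideanSpace.basisFun (Fin 2) ℝ).toBasis.orientation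

lemma cone_oangle (o : Orientation ℝ Plane (Fin 2)) {U W : Plane} (hU : U ≠ 0) (hW : W ≠ 0)
    (h0 : 0 < (o.oangle U W).toReal) (hpi : o.oangle U W ≠ π)
    {s t : ℝ} (hs : 0 ≤ s) (ht : 0 ≤ t) (hX : s • U + t • W ≠ 0) :
    0 ≤ (o.oangle U (s • U + t • W)).toReal ∧
      (o.oangle U (s • U + t • W)).toReal ≤ (o.oangle U W).toReal := by
  have hΘsign : (o.oangle U W).sign = 1 := by
    rw [← Real.Angle.sign_toReal hpi]; exact sign_pos h0
  rcases eq_or_lt_of_le ht with rfl | htpos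
  · have hs0 : s ≠ 0 := by rintro rfl; simp at hX
    have hspos : 0 < s := lt_of_le_of_ne hs (Ne.symm hs0)
    rw [zero_smul, add_zero, o.oangle_smul_right_of_pos _ _ hspos, o.oangle_self,
      Real.Angle.toReal_zero]
    exact ⟨le_refl 0, h0.le⟩
  rcases eq_or_lt_of_le hs with rfl | hspos
  · rw [zero_smul, zero_add, o.oangle_smul_right_of_pos _ _ htpos]
    exact ⟨h0.le, le_refl _⟩
  · set X := s • U + t • W with hXdef
    have hsignα : (o.oangle U X).sign = 1 := by
      rw [hXdef, o.oangle_sign_smul_add_smul_right, hΘsign, sign_pos htpos, one_mul]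
    have hsignβ : (o.oangle X W).sign = 1 := by
      rw [hXdef, o.oangle_sign_smul_add_smul_left, hΘsign, sign_pos hspos, one_mul]
    have hαpi : o.oangle U X ≠ π := by
      intro h; rw [h, Real.Angle.sign_coe_pi] at hsignα; exact zero_ne_one hsignα
    have hβpi : o.oangle X W ≠ π := by
      intro h; rw [h, Real.Angle.sign_coe_pi] at hsignβ; exact zero_ne_one hsignβ
    have hα : 0 < (o.oangle U X).toReal := by
      have h1 := Real.Angle.sign_toReal hαpi
      rw [hsignα] at h1
      exact sign_eq_one_iff.mp h1
    have hβ : 0 < (o.oangle X W).toReal := by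
      have h1 := Real.Angle.sign_toReal hβpi
      rw [hsignβ] at h1
      exact sign_eq_one_iff.mp h1
    have hαlt : (o.oangle U X).toReal < π :=
      lt_of_le_of_ne (Real.Angle.toReal_le_pi _) fun h => hαpi (Real.Angle.toReal_eq_pi_iff.mp h)
    have hβlt : (o.oangle X W).toReal < π :=
      lt_of_le_of_ne (Real.Angle.toReal_le_pi _) fun h => hβpi (Real.Angle.toReal_eq_pi_iff.mp h)
    have hadd : o.oangle U X + o.oangle X W = o.oangle U W := o.oangle_add hU hX hW
    set α := (o.oangle U X).toReal
    set β := (o.oangle X W).toReal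
    have hsum : ((α + β : ℝ) : Real.Angle) = o.oangle U W := by
      rw [Real.Angle.coe_add, Real.Angle.coe_toReal, Real.Angle.coe_toReal, hadd]
    by_cases hle : α + β ≤ π
    · have hEq : (o.oangle U W).toReal = α + β := by
        rw [← hsum, Real.Angle.toReal_coe_eq_self_iff.mpr ⟨by linarith [Real.pi_pos], hle⟩]
      exact ⟨hα.le, by linarith⟩
    · exfalso
      push_neg at hle
      have h2 : ((α + β : ℝ) : Real.Angle) = ((α + β - 2 * π : ℝ) : Real.Angle) := by
        rw [Real.Angle.coe_sub, Real.Angle.coe_two_pi, sub_zero]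
      have h3 : (o.oangle U W).toReal = α + β - 2 * π := by
        rw [← hsum, h2,
          Real.Angle.toReal_coe_eq_self_iff.mpr ⟨by linarith, by linarith [Real.pi_pos]⟩]
      linarith

lemma cone_angle_le (o : Orientation ℝ Plane (Fin 2)) {U W A B : Plane} (hU : U ≠ 0) (hW : W ≠ 0)
    (hA : A ≠ 0) (hB : B ≠ 0) (h0 : 0 < (o.oangle U W).toReal) (hpi : o.oangle U W ≠ π)
    (hAc : ∃ s t : ℝ, 0 ≤ s ∧ 0 ≤ t ∧ A = s • U + t • W)
    (hBc : ∃ s t : ℝ, 0 ≤ s ∧ 0 ≤ t ∧ B = s • U + t • W) :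
    InnerProductGeometry.angle A B ≤ InnerProductGeometry.angle U W := by
  obtain ⟨s, t, hs, ht, hAe⟩ := hAc
  obtain ⟨s', t', hs', ht', hBe⟩ := hBc
  have hAa : 0 ≤ (o.oangle U A).toReal ∧ (o.oangle U A).toReal ≤ (o.oangle U W).toReal := by
    have h1 := cone_oangle o hU hW h0 hpi hs ht (hAe ▸ hA)
    rwa [← hAe] at h1
  have hBa : 0 ≤ (o.oangle U B).toReal ∧ (o.oangle U B).toReal ≤ (o.oangle U W).toReal := by
    have h1 := cone_oangle o hU hW h0 hpi hs' ht' (hBe ▸ hB)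
    rwa [← hBe] at h1
  set θA := (o.oangle U A).toReal
  set θB := (o.oangle U B).toReal
  set Θt := (o.oangle U W).toReal with hΘdef
  have hΘlt : Θt < π :=
    lt_of_le_of_ne (Real.Angle.toReal_le_pi _) fun h => hpi (Real.Angle.toReal_eq_pi_iff.mp h)
  have h1 : o.oangle A B = ((θB - θA : ℝ) : Real.Angle) := by
    have h2 : o.oangle U A + o.oangle A B = o.oangle U B := o.oangle_add hU hA hB
    have h3 : o.oangle A B = o.oangle U B - o.oangle U A := eq_sub_of_add_eq' h2
    rw [h3, ← Real.Angle.coe_toReal (o.oangle U B), ← Real.Angle.coe_toReal (o.oangle U A),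
      ← Real.Angle.coe_sub]
  have h4 : (o.oangle A B).toReal = θB - θA := by
    rw [h1]
    exact Real.Angle.toReal_coe_eq_self_iff.mpr
      ⟨by linarith [hAa.1, hAa.2, hBa.1], by linarith [hAa.1, hBa.2, Real.pi_pos]⟩
  rw [o.angle_eq_abs_oangle_toReal hA hB, o.angle_eq_abs_oangle_toReal hU hW, h4, ← hΘdef,
    abs_of_pos h0]
  exact abs_le.mpr ⟨by linarith [hAa.2, hBa.1], by linarith [hAa.1, hBa.2]⟩

lemma ConvexPolygon.not_collinear (O : ConvexPolygon) {v u w : Plane}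
    (hv : v ∈ O.verts) (hu : u ∈ O.verts) (hw : w ∈ O.verts)
    (hvu : u ≠ v) (hvw : w ≠ v) (huw : u ≠ w) :
    ¬ Collinear ℝ ({u, v, w} : Set Plane) := by
  intro hc
  have key : ∀ x y z : Plane, x ∈ O.verts → y ∈ O.verts → z ∈ O.verts → x ≠ y → z ≠ y →
      Wbtw ℝ x y z → False := by
    intro x y z hx hy hz hxy hzy hb
    have hx' : x ∈ (↑O.verts : Set Plane) \ {y} := ⟨hx, by simpa using hxy⟩
    have hz' : z ∈ (↑O.verts : Set Plane) \ {y} := ⟨hz, by simpa using hzy⟩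
    exact O.strictConvexPos y hy (segment_subset_convexHull hx' hz' hb.mem_segment)
  rcases hc.wbtw_or_wbtw_or_wbtw with h | h | h
  · exact key u v w hu hv hw hvu hvw h
  · exact key v w u hv hw hu hvw.symm huw h
  · exact key w u v hw hu hv huw.symm hvu.symm h

lemma ConvexPolygon.li (O : ConvexPolygon) {v u w : Plane}
    (hv : v ∈ O.verts) (hu : u ∈ O.verts) (hw : w ∈ O.verts)
    (hvu : u ≠ v) (hvw : w ≠ v) (huw : u ≠ w) :
    LinearIndependent ℝ ![u - v, w - v] := by
  rw [linearIndependent_fin2]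
  constructor
  · simpa using sub_ne_zero.mpr hvw
  · intro a h
    simp only [Matrix.cons_val_one, Matrix.head_cons, Matrix.cons_val_zero] at h
    have hline : u = AffineMap.lineMap v w a := by
      rw [AffineMap.lineMap_apply]
      simp only [vsub_eq_sub, vadd_eq_add]
      exact sub_eq_iff_eq_add.mp h.symm
    have hmem : u ∈ line[ℝ, v, w] := hline ▸ AffineMap.lineMap_mem_affineSpan_pair a v w
    exact O.not_collinear hv hu hw hvu hvw huw (collinear_insert_of_mem_affineSpan_pair hmem)

lemma ConvexPolygon.exists_support (O : ConvexPolygon) {v u w : Plane} (hadj : O.Adj v u)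
    (hwV : w ∈ O.verts) (hni : ¬ Collinear ℝ ({u, v, w} : Set Plane)) :
    ∃ f : Plane →L[ℝ] ℝ, (∀ x ∈ O.body, f x ≤ f v) ∧ f u = f v ∧ f w < f v := by
  obtain ⟨hv, hu, hvu, hseg⟩ := hadj
  have hAI : AffineIndependent ℝ ![u, v, w] := affineIndependent_iff_not_collinear_set.mpr hni
  have hspan : affineSpan ℝ (Set.range ![u, v, w]) = ⊤ := by
    rw [hAI.affineSpan_eq_top_iff_card_eq_finrank_add_one]
    simp [finrank_euclideanSpace_fin]
  have hrange : Set.range ![u, v, w] = ({u, v, w} : Set Plane) := by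
    ext x
    constructor
    · rintro ⟨i, rfl⟩; fin_cases i <;> simp
    · rintro (rfl | rfl | rfl)
      exacts [⟨0, rfl⟩, ⟨1, rfl⟩, ⟨2, rfl⟩]
  have hTne : (interior (convexHull ℝ (Set.range ![u, v, w]))).Nonempty :=
    interior_convexHull_nonempty_iff_affineSpan_eq_top.mpr hspan
  have hTsub : convexHull ℝ (Set.range ![u, v, w]) ⊆ O.body := by
    rw [hrange]
    refine convexHull_mono ?_
    intro x hx
    simp only [Set.mem_insert_iff, Set.mem_singleton_iff] at hx
    rcases hx with rfl | rfl | rfl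
    exacts [hu, hv, hwV]
  obtain ⟨y, hy⟩ := hTne.mono (interior_mono hTsub)
  have hmfr : midpoint ℝ v u ∈ frontier O.body := hseg (midpoint_mem_segment v u)
  have hmint : midpoint ℝ v u ∉ interior O.body := fun h => hmfr.2 h
  obtain ⟨f, hf⟩ := geometric_hahn_banach_open_point
    ((convex_convexHull ℝ _).interior) isOpen_interior hmint
  have hle : ∀ x ∈ O.body, f x ≤ f (midpoint ℝ v u) := by
    intro x hx
    by_contra hgt
    push_neg at hgt
    have key : ∀ r : ℝ, 0 < r → r ≤ 1 → (1 - r) * f x + r * f y < f (midpoint ℝ v u) := by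
      intro r hr0 hr1
      have hmem : (1 - r) • x + r • y ∈ interior O.body :=
        (convex_convexHull ℝ _).combo_self_interior_mem_interior hx hy (by linarith) hr0
          (by ring)
      have h5 := hf _ hmem
      simpa [map_add, map_smul, smul_eq_mul] using h5
    set D := |f x - f y| + 1 with hD_def
    have hD : 0 < D := by positivity
    set c := f x - f (midpoint ℝ v u) with hc_def
    have hc : 0 < c := by simp only [hc_def]; linarith
    set r := min 1 (c / (2 * D)) with hr_def
    have hr0 : 0 < r := lt_min one_pos (by positivity)
    have hr1 : r ≤ 1 := min_le_left _ _
    have h5 := key r hr0 hr1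
    have h6 : r * (f x - f y) ≤ r * D := by
      have h7 : f x - f y ≤ D := le_trans (le_abs_self _) (by simp [hD_def])
      exact mul_le_mul_of_nonneg_left h7 hr0.le
    have h7 : r * D ≤ c / 2 := by
      have h8 : r ≤ c / (2 * D) := min_le_right _ _
      calc r * D ≤ c / (2 * D) * D := mul_le_mul_of_nonneg_right h8 hD.le
        _ = c / 2 := by field_simp
    nlinarith
  have hm2 : f (midpoint ℝ v u) = (f v + f u) / 2 := by
    rw [midpoint_eq_smul_add, map_smul, map_add, smul_eq_mul, invOf_eq_inv]
    ring
  have hvb : v ∈ O.body := subset_convexHull ℝ _ hv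
  have hub : u ∈ O.body := subset_convexHull ℝ _ hu
  have hwb : w ∈ O.body := subset_convexHull ℝ _ hwV
  have h8 := hle v hvb
  have h9 := hle u hub
  have h10 := hle w hwb
  have hfv : f v = f (midpoint ℝ v u) := by linarith
  have hfu : f u = f v := by linarith
  have hstrict : f w < f v := by
    rcases lt_or_eq_of_le h10 with hlt | heq
    · linarith
    · exfalso
      have hconv : Convex ℝ {x : Plane | f x = f (midpoint ℝ v u)} := by
        intro x₁ hx₁ x₂ hx₂ a b ha hb hab
        simp only [Set.mem_setOf_eq] at hx₁ hx₂ ⊢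
        rw [map_add, map_smul, map_smul, smul_eq_mul, smul_eq_mul, hx₁, hx₂, ← add_mul, hab,
          one_mul]
      have hsub2 : convexHull ℝ ({u, v, w} : Set Plane) ⊆
          {x : Plane | f x = f (midpoint ℝ v u)} := by
        refine convexHull_min ?_ hconv
        intro x hx
        simp only [Set.mem_insert_iff, Set.mem_singleton_iff] at hx
        rcases hx with rfl | rfl | rfl
        · exact hfu.trans hfv
        · exact hfv
        · exact heq
      obtain ⟨z, hz⟩ := hTne
      have hz1 : f z = f (midpoint ℝ v u) := hsub2 (by rw [← hrange]; exact interior_subset hz)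
      have hz2 : f z < f (midpoint ℝ v u) := hf z (interior_mono hTsub hz)
      linarith
  exact ⟨f, fun x hx => hfv ▸ hle x hx, hfu, hstrict⟩

end Aux


/-- for a vertex `v` of `O` with adjacent vertices `u` and `w`, any angle
`∠ a v b` with `a, b ∈ O`, `a ≠ v ≠ b`, is at most the interior angle `∠ u v w`. -/
theorem angle_le_interior_angle (O : ConvexPolygon) (v u w : Plane)
    (hu : O.Adj v u) (hw : O.Adj v w) (huw : u ≠ w) :
    ∀ a ∈ O.body, ∀ b ∈ O.body, a ≠ v → b ≠ v → ∠ a v b ≤ ∠ u v w := by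
  obtain ⟨hv, huV, hvu, hsegu⟩ := id hu
  obtain ⟨-, hwV, hvw, hsegw⟩ := id hw
  have hni : ¬ Collinear ℝ ({u, v, w} : Set Plane) :=
    O.not_collinear hv huV hwV hvu.symm hvw.symm huw
  have hni' : ¬ Collinear ℝ ({w, v, u} : Set Plane) := fun hc => hni (by
    rwa [show ({w, v, u} : Set Plane) = {u, v, w} from by ext x; simp; tauto] at hc)
  obtain ⟨f, hf_le, hf_u, hf_w⟩ := O.exists_support hu hwV hni
  obtain ⟨g, hg_le, hg_w, hg_u⟩ := O.exists_support hw huV hni'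
  have hLI : LinearIndependent ℝ ![u - v, w - v] :=
    O.li hv huV hwV hvu.symm hvw.symm huw
  have hcard : Fintype.card (Fin 2) = Module.finrank ℝ Plane := by
    simp [finrank_euclideanSpace_fin]
  set bas := basisOfLinearIndependentOfCardEqFinrank hLI hcard with hbas_def
  have hb0 : bas 0 = u - v := by
    rw [hbas_def, coe_basisOfLinearIndependentOfCardEqFinrank]
    rfl
  have hb1 : bas 1 = w - v := by
    rw [hbas_def, coe_basisOfLinearIndependentOfCardEqFinrank]
    rfl
  have hUne : u - v ≠ 0 := sub_ne_zero.mpr hvu.symm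
  have hWne : w - v ≠ 0 := sub_ne_zero.mpr hvw.symm
  have decomp : ∀ x : Plane, x ∈ O.body →
      ∃ s t : ℝ, 0 ≤ s ∧ 0 ≤ t ∧ x - v = s • (u - v) + t • (w - v) := by
    intro x hx
    set s := bas.repr (x - v) 0 with hs_def
    set t := bas.repr (x - v) 1 with ht_def
    have hxe : x - v = s • (u - v) + t • (w - v) := by
      have hsr := bas.sum_repr (x - v)
      rw [Fin.sum_univ_two, hb0, hb1] at hsr
      exact hsr.symm
    have hfx : f (x - v) ≤ 0 := by rw [map_sub]; linarith [hf_le x hx]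
    have hfU : f (u - v) = 0 := by rw [map_sub]; linarith
    have hfW : f (w - v) < 0 := by rw [map_sub]; linarith
    have hgx : g (x - v) ≤ 0 := by rw [map_sub]; linarith [hg_le x hx]
    have hgW : g (w - v) = 0 := by rw [map_sub]; linarith
    have hgU : g (u - v) < 0 := by rw [map_sub]; linarith
    have hfsum : f (x - v) = s * f (u - v) + t * f (w - v) := by
      rw [hxe, map_add, map_smul, map_smul, smul_eq_mul, smul_eq_mul]
    have hgsum : g (x - v) = s * g (u - v) + t * g (w - v) := by
      rw [hxe, map_add, map_smul, map_smul, smul_eq_mul, smul_eq_mul]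
    have ht : 0 ≤ t := by
      by_contra hneg
      push_neg at hneg
      nlinarith [mul_pos_of_neg_of_neg hneg hfW, mul_eq_zero_of_right s hfU]
    have hs : 0 ≤ s := by
      by_contra hneg
      push_neg at hneg
      nlinarith [mul_pos_of_neg_of_neg hneg hgU, mul_eq_zero_of_right t hgW]
    exact ⟨s, t, hs, ht, hxe⟩
  intro a ha b hb hav hbv
  have hAne : a - v ≠ 0 := sub_ne_zero.mpr hav
  have hBne : b - v ≠ 0 := sub_ne_zero.mpr hbv
  obtain ⟨sa, ta, hsa, hta, hAe⟩ := decomp a ha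
  obtain ⟨sb, tb, hsb, htb, hBe⟩ := decomp b hb
  have hne := (ori.oangle_ne_zero_and_ne_pi_iff_linearIndependent
    (x := u - v) (y := w - v)).mpr hLI
  have htr0 : (ori.oangle (u - v) (w - v)).toReal ≠ 0 := fun h =>
    hne.1 (Real.Angle.toReal_eq_zero_iff.mp h)
  have hangle1 : ∠ a v b = InnerProductGeometry.angle (a - v) (b - v) := by
    simp only [EuclideanGeometry.angle, vsub_eq_sub]
  have hangle2 : ∠ u v w = InnerProductGeometry.angle (u - v) (w - v) := by
    simp only [EuclideanGeometry.angle, vsub_eq_sub]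
  have hangle3 : ∠ w v u = InnerProductGeometry.angle (w - v) (u - v) := by
    simp only [EuclideanGeometry.angle, vsub_eq_sub]
  rcases htr0.lt_or_gt with hneg | hpos
  · have hswap : ori.oangle (w - v) (u - v) = -(ori.oangle (u - v) (w - v)) :=
      ori.oangle_rev (u - v) (w - v)
    have hΘlt : (ori.oangle (u - v) (w - v)).toReal < π :=
      lt_of_le_of_ne (Real.Angle.toReal_le_pi _)
        (fun h => hne.2 (Real.Angle.toReal_eq_pi_iff.mp h))
    have hΘgt := Real.Angle.neg_pi_lt_toReal (ori.oangle (u - v) (w - v))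
    have htoReal : (ori.oangle (w - v) (u - v)).toReal =
        -(ori.oangle (u - v) (w - v)).toReal := by
      rw [hswap]
      have h1 : ((-(ori.oangle (u - v) (w - v)).toReal : ℝ) : Real.Angle) =
          -(ori.oangle (u - v) (w - v)) := by
        rw [Real.Angle.coe_neg, Real.Angle.coe_toReal]
      rw [← h1, Real.Angle.toReal_coe_eq_self_iff.mpr ⟨by linarith, by linarith⟩]
    have hpos' : 0 < (ori.oangle (w - v) (u - v)).toReal := by rw [htoReal]; linarith
    have hpi' : ori.oangle (w - v) (u - v) ≠ π := by
      intro h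
      rw [h, Real.Angle.toReal_pi] at htoReal
      linarith
    have key := cone_angle_le ori hWne hUne hAne hBne hpos' hpi'
      ⟨ta, sa, hta, hsa, by rw [add_comm]; exact hAe⟩
      ⟨tb, sb, htb, hsb, by rw [add_comm]; exact hBe⟩
    rw [hangle1, EuclideanGeometry.angle_comm u v w, hangle3]
    exact key
  · have key := cone_angle_le ori hUne hWne hAne hBne hpos hne.2
      ⟨sa, ta, hsa, hta, hAe⟩ ⟨sb, tb, hsb, htb, hBe⟩
    rw [hangle1, hangle2]
    exact key

end
end
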